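/- Suppose X is partitioned into pairwise disjoint sets H̃, L̃, Ũ with H̃ ∪ L̃ ∪ Ũ = X such that pH(x) = r^max(x) for all x ∈ H̃, pL(x) = r^max(x) for all x ∈ L̃, pU(x) = r^max(x) for all x ∈ Ũ, and X is nonempty. Then with probability at least 1 − Σ_{x ∈ X} r^min(x) over ω, the following holds: for every pred : X → Bool with pred x = true for all x ∈ H̃ and pred x = false for all x ∈ L̃, the accuracy satisfies (TP + TN) / (TP + TN + FP + FN) ≥ (|H̃| + |L̃|) / (|H̃| + |L̃| + |Ũ|). -/

import Mathlib

/-!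
On the event that every `x ∈ H` lands above `θ` and every `x ∈ L` at or below it, a predictor
that accepts `H` and rejects `L` classifies all of `H ∪ L` correctly, so its accuracy is at least
`(|H| + |L|) / |X| ≥ (|H| + |L|) / (|H| + |L| + |U|)`. By the union bound that event fails with
probability at most `∑_{x ∈ H} pL x + ∑_{x ∈ L} pH x`, and since `pH x + pL x = 1`, maximality of
`pH x` (resp. `pL x`) forces `pL x ≤ rmin x` (resp. `pH x ≤ rmin x`).
-/

open MeasureTheory

theorem div_le_div_of_nonneg_of_le_of_le_of_le {p q t s : ℝ} (hp : 0 ≤ p) (hpq : p ≤ q)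
    (hqt : q ≤ t) (hts : t ≤ s) : p / s ≤ q / t := by
  rcases (hp.trans (hpq.trans hqt)).eq_or_lt with ht | ht
  · obtain rfl : p = 0 := by linarith
    simp [← ht]
  · exact div_le_div₀ (hp.trans hpq) hpq ht hts

section Confusion

variable {X : Type*} (pred : X → Bool) (pos neg : X → Prop)

theorem ncard_confusion_add [Finite X] (hneg : ∀ x, neg x ↔ ¬ pos x) :
    {x | pred x = true ∧ pos x}.ncard + {x | pred x = false ∧ neg x}.ncard
      + {x | pred x = true ∧ neg x}.ncard + {x | pred x = false ∧ pos x}.ncard = Nat.card X := by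
  set s := {x | pred x = true}
  set t := {x | pos x}
  have hs := Set.ncard_inter_add_ncard_sdiff_eq_ncard s t
  have hsc := Set.ncard_inter_add_ncard_sdiff_eq_ncard sᶜ t
  have hcompl := Set.ncard_add_ncard_compl s
  simp_rw [hneg, ← Bool.not_eq_true]
  change (s ∩ t).ncard + (sᶜ \ t).ncard + (s \ t).ncard + (sᶜ ∩ t).ncard = _
  omega

theorem card_add_card_div_le_accuracy [Fintype X] [DecidableEq X] (H L U : Finset X)
    (hunion : H ∪ L ∪ U = Finset.univ) (hneg : ∀ x, neg x ↔ ¬ pos x)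
    (hpredH : ∀ x ∈ H, pred x = true) (hpredL : ∀ x ∈ L, pred x = false)
    (hposH : ∀ x ∈ H, pos x) (hnegL : ∀ x ∈ L, neg x) :
    ((H.card : ℝ) + (L.card : ℝ)) / ((H.card : ℝ) + (L.card : ℝ) + (U.card : ℝ)) ≤
      (({x | pred x = true ∧ pos x}.ncard : ℝ) + ({x | pred x = false ∧ neg x}.ncard : ℝ)) /
        (({x | pred x = true ∧ pos x}.ncard : ℝ) + ({x | pred x = false ∧ neg x}.ncard : ℝ)
          + ({x | pred x = true ∧ neg x}.ncard : ℝ) + ({x | pred x = false ∧ pos x}.ncard : ℝ)) := by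
  have hH : H.card ≤ {x | pred x = true ∧ pos x}.ncard := by
    rw [← Set.ncard_coe_finset]
    exact Set.ncard_le_ncard fun x hx => ⟨hpredH x hx, hposH x hx⟩
  have hL : L.card ≤ {x | pred x = false ∧ neg x}.ncard := by
    rw [← Set.ncard_coe_finset]
    exact Set.ncard_le_ncard fun x hx => ⟨hpredL x hx, hnegL x hx⟩
  have hcard : Fintype.card X ≤ H.card + L.card + U.card := by
    rw [← Finset.card_univ, ← hunion]
    exact (Finset.card_union_le _ _).trans (Nat.add_le_add_right (Finset.card_union_le _ _) _)
  have htotal := ncard_confusion_add pred pos neg hneg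
  rw [Nat.card_eq_fintype_card] at htotal
  apply div_le_div_of_nonneg_of_le_of_le_of_le (by positivity) <;> norm_cast <;> omega

end Confusion

theorem one_sub_sum_add_sum_le_measureReal {Ω ι : Type*} [MeasurableSpace Ω] (μ : Measure Ω)
    [IsProbabilityMeasure μ] (s t : Finset ι) (A B : ι → Set Ω) :
    1 - (∑ i ∈ s, μ.real (A i) + ∑ i ∈ t, μ.real (B i)) ≤
      μ.real {ω | (∀ i ∈ s, ω ∉ A i) ∧ ∀ i ∈ t, ω ∉ B i} := by
  set G := {ω | (∀ i ∈ s, ω ∉ A i) ∧ ∀ i ∈ t, ω ∉ B i}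
  have hcompl : Gᶜ ⊆ (⋃ i ∈ s, A i) ∪ ⋃ i ∈ t, B i := by
    intro ω hω
    simp only [G, Set.mem_compl_iff, Set.mem_ofPred_eq, not_and_or, not_forall, not_not] at hω
    rcases hω with ⟨i, hi, hA⟩ | ⟨i, hi, hB⟩
    · exact Or.inl (Set.mem_biUnion hi hA)
    · exact Or.inr (Set.mem_biUnion hi hB)
  calc 1 - (∑ i ∈ s, μ.real (A i) + ∑ i ∈ t, μ.real (B i))
      ≤ 1 - μ.real Gᶜ := by
        gcongr
        exact (measureReal_mono hcompl).trans <| (measureReal_union_le _ _).trans <|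
          add_le_add (measureReal_biUnion_finset_le _ _) (measureReal_biUnion_finset_le _ _)
    _ ≤ μ.real G := by
        have := measureReal_union_le (μ := μ) G Gᶜ
        rw [Set.union_compl_self, probReal_univ] at this
        linarith

theorem measureReal_lt_add_measureReal_le {Ω : Type*} [MeasurableSpace Ω] (μ : Measure Ω)
    [IsProbabilityMeasure μ] {f : Ω → ℝ} (hf : Measurable f) (θ : ℝ) :
    μ.real {ω | θ < f ω} + μ.real {ω | f ω ≤ θ} = 1 := by
  have h := probReal_compl_eq_one_sub (μ := μ) (measurableSet_lt (measurable_const (a := θ)) hf)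
  simp only [Set.compl_ofPred, not_lt] at h
  linarith

theorem le_min_min_one_sub_of_eq_max {a b c : ℝ} (hab : a + b ≤ 1) (h : a = max a (max b c)) :
    b ≤ min a (min b (1 - c)) := by
  have hb : b ≤ a := h ▸ le_max_of_le_right (le_max_left _ _)
  have hc : c ≤ a := h ▸ le_max_of_le_right (le_max_right _ _)
  exact le_min hb (le_min le_rfl (by linarith))

theorem sum_add_sum_le_sum_of_disjoint {ι M : Type*} [Fintype ι] [DecidableEq ι]
    [AddCommMonoid M] [PartialOrder M] [IsOrderedAddMonoid M] {s t : Finset ι}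
    (hst : Disjoint s t) {f g r : ι → M} (hr : ∀ i, 0 ≤ r i) (hf : ∀ i ∈ s, f i ≤ r i)
    (hg : ∀ i ∈ t, g i ≤ r i) : ∑ i ∈ s, f i + ∑ i ∈ t, g i ≤ ∑ i, r i :=
  calc ∑ i ∈ s, f i + ∑ i ∈ t, g i ≤ ∑ i ∈ s, r i + ∑ i ∈ t, r i :=
        add_le_add (Finset.sum_le_sum hf) (Finset.sum_le_sum hg)
    _ = ∑ i ∈ s ∪ t, r i := (Finset.sum_union hst).symm
    _ ≤ ∑ i, r i := Finset.sum_le_sum_of_subset_of_nonneg (Finset.subset_univ _) fun i _ _ => hr i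

theorem stmt_7_general
    {Ω : Type*} [MeasurableSpace Ω] (μ : Measure Ω) [IsProbabilityMeasure μ]
    {X : Type*} [Fintype X] [DecidableEq X]
    (θ ε : ℝ)
    (F : X → Ω → ℝ) (hF : ∀ x, Measurable (F x))
    (pH pL pU rmin rmax : X → ℝ)
    (hpH : ∀ x, pH x = (μ {ω | θ < F x ω}).toReal)
    (hpL : ∀ x, pL x = (μ {ω | F x ω ≤ θ}).toReal)
    (hpU : ∀ x, pU x = (μ {ω | θ - ε / 2 < F x ω ∧ F x ω ≤ θ + ε / 2}).toReal)
    (hrmin : ∀ x, rmin x = min (pH x) (min (pL x) (1 - pU x)))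
    (hrmax : ∀ x, rmax x = max (pH x) (max (pL x) (pU x)))
    (H L U : Finset X)
    (hHL : Disjoint H L)
    (hunion : H ∪ L ∪ U = Finset.univ)
    (hH : ∀ x ∈ H, pH x = rmax x)
    (hL : ∀ x ∈ L, pL x = rmax x) :
    1 - ∑ x, rmin x ≤
      (μ {ω | ∀ pred : X → Bool,
          (∀ x ∈ H, pred x = true) → (∀ x ∈ L, pred x = false) →
          ((H.card : ℝ) + (L.card : ℝ)) / ((H.card : ℝ) + (L.card : ℝ) + (U.card : ℝ)) ≤ ((({x | pred x = true ∧ θ < F x ω}.ncard : ℝ)) + (({x | pred x = false ∧ F x ω ≤ θ}.ncard : ℝ))) / ((({x | pred x = true ∧ θ < F x ω}.ncard : ℝ)) + (({x | pred x = false ∧ F x ω ≤ θ}.ncard : ℝ)) + (({x | pred x = true ∧ F x ω ≤ θ}.ncard : ℝ)) + (({x | pred x = false ∧ θ < F x ω}.ncard : ℝ)))}).toReal := by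
  have hpH_add_pL : ∀ x, pH x + pL x = 1 := fun x => by
    rw [hpH, hpL]; exact measureReal_lt_add_measureReal_le μ (hF x) θ
  have hrmin_nonneg : ∀ x, 0 ≤ rmin x := fun x => by
    have : pU x ≤ 1 := hpU x ▸ measureReal_le_one
    rw [hrmin, hpH, hpL]
    exact le_min measureReal_nonneg (le_min measureReal_nonneg (by linarith))
  have hrminH : ∀ x ∈ H, pL x ≤ rmin x := fun x hx => by
    rw [hrmin]
    exact le_min_min_one_sub_of_eq_max (hpH_add_pL x).le ((hH x hx).trans (hrmax x))
  have hrminL : ∀ x ∈ L, pH x ≤ rmin x := fun x hx => by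
    rw [hrmin, min_left_comm]
    refine le_min_min_one_sub_of_eq_max (by linarith [hpH_add_pL x]) ?_
    rw [max_left_comm, ← hrmax]; exact hL x hx
  have hfailure_le : ∑ x ∈ H, pL x + ∑ x ∈ L, pH x ≤ ∑ x, rmin x :=
    sum_add_sum_le_sum_of_disjoint hHL hrmin_nonneg hrminH hrminL
  calc 1 - ∑ x, rmin x ≤ 1 - (∑ x ∈ H, pL x + ∑ x ∈ L, pH x) := by linarith
    _ ≤ μ.real {ω | (∀ x ∈ H, ω ∉ {ω | F x ω ≤ θ}) ∧ ∀ x ∈ L, ω ∉ {ω | θ < F x ω}} := by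
        simp only [hpH, hpL]
        exact one_sub_sum_add_sum_le_measureReal μ H L _ _
    _ ≤ _ := by
        refine measureReal_mono fun ω ⟨hωH, hωL⟩ pred hpredH hpredL => ?_
        exact card_add_card_div_le_accuracy pred (fun x => θ < F x ω) (fun x => F x ω ≤ θ) H L U
          hunion (fun _ => not_lt.symm) hpredH hpredL (fun x hx => not_le.1 (hωH x hx))
          (fun x hx => not_lt.1 (hωL x hx))

theorem stmt_7
    {Ω : Type*} [MeasurableSpace Ω] (μ : Measure Ω) [IsProbabilityMeasure μ]
    {X : Type*} [Fintype X] [DecidableEq X]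
    (θ ε : ℝ) (hε : 0 < ε)
    (F : X → Ω → ℝ) (hF : ∀ x, Measurable (F x))
    (pH pL pU rmin rmax : X → ℝ)
    (hpH : ∀ x, pH x = (μ {ω | θ < F x ω}).toReal)
    (hpL : ∀ x, pL x = (μ {ω | F x ω ≤ θ}).toReal)
    (hpU : ∀ x, pU x = (μ {ω | θ - ε / 2 < F x ω ∧ F x ω ≤ θ + ε / 2}).toReal)
    (hrmin : ∀ x, rmin x = min (pH x) (min (pL x) (1 - pU x)))
    (hrmax : ∀ x, rmax x = max (pH x) (max (pL x) (pU x)))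
    (H L U : Finset X)
    (hHL : Disjoint H L) (hHU : Disjoint H U) (hLU : Disjoint L U)
    (hunion : H ∪ L ∪ U = Finset.univ)
    (hH : ∀ x ∈ H, pH x = rmax x)
    (hL : ∀ x ∈ L, pL x = rmax x)
    (hU : ∀ x ∈ U, pU x = rmax x)
    (hne : Finset.univ.Nonempty (α := X)) :
    1 - ∑ x, rmin x ≤
      (μ {ω | ∀ pred : X → Bool,
          (∀ x ∈ H, pred x = true) → (∀ x ∈ L, pred x = false) →
          ((H.card : ℝ) + (L.card : ℝ)) / ((H.card : ℝ) + (L.card : ℝ) + (U.card : ℝ)) ≤ ((({x | pred x = true ∧ θ < F x ω}.ncard : ℝ)) + (({x | pred x = false ∧ F x ω ≤ θ}.ncard : ℝ))) / ((({x | pred x = true ∧ θ < F x ω}.ncard : ℝ)) + (({x | pred x = false ∧ F x ω ≤ θ}.ncard : ℝ)) + (({x | pred x = true ∧ F x ω ≤ θ}.ncard : ℝ)) + (({x | pred x = false ∧ θ < F x ω}.ncard : ℝ)))}).toReal :=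
  stmt_7_general μ θ ε F hF pH pL pU rmin rmax hpH hpL hpU hrmin hrmax H L U hHL hunion hH hL
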